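/- Let G be a finite group acting on a finite fiber bundle (Z,T,π) (i.e., acting on Z and T with π equivariant) and acting on ℂ^d via a projective unitary representation U. If M is a G-covariant measurement assemblage on (Z,T,π), then η^g(M) = max{η ∈ [0,1] : η·M + (1−η)·N is compatible for some G-covariant measurement assemblage N}. That is, the optimal noise in the definition of the robustness can be taken G-covariant. -/

import Mathlib

/-!
The feasible visibilities form a compact set: a feasible triple (η, N, J) of visibility, noise
assemblage and joint POVM lives in a product of `[0, 1]` with copies of the compact set of effects
`0 ≤ A ≤ 1`, and the feasibility conditions are closed. Hence the robustness is attained by some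
noise `N` with joint POVM `J`.

Twirling, `f ↦ |G|⁻¹ ∑ g, U g * f (g⁻¹ • ·) * (U g)ᴴ`, is linear, fixes the covariant `M`, maps
assemblages to assemblages and compatible assemblages to compatible ones (twirl the joint POVM
for the action `(g • s) t = g • s (g⁻¹ • t)` on sections), and, because `U` is projective with
unimodular cocycle, always produces covariant assemblages. Twirling the optimal `N` therefore
gives covariant noise achieving the same visibility.
-/

open Matrix Complex Finset
open scoped ComplexOrder

noncomputable section

/-- A measurement assemblage on the finite fiber bundle `π : Z → T`: positive semidefinite
effects summing to the identity on each fiber. -/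
def IsAssemblage {d : ℕ} {Z T : Type} [Fintype Z] [DecidableEq T] (π : Z → T)
    (M : Z → Matrix (Fin d) (Fin d) ℂ) : Prop :=
  (∀ z, (M z).PosSemidef) ∧
    ∀ t : T, ∑ z ∈ Finset.univ.filter (fun z => π z = t), M z = 1

/-- A compatible assemblage: there is a POVM on the set of sections of the bundle whose
suitable margins reproduce the assemblage. -/
def CompatibleAsm {d : ℕ} {Z T : Type} [Fintype Z] [Fintype T] [DecidableEq T] [DecidableEq Z]
    (π : Z → T) (M : Z → Matrix (Fin d) (Fin d) ℂ) : Prop :=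
  ∃ J : {s : T → Z // ∀ t, π (s t) = t} → Matrix (Fin d) (Fin d) ℂ,
    (∀ s, (J s).PosSemidef) ∧ (∑ s, J s = 1) ∧
    ∀ z, M z = ∑ s ∈ Finset.univ.filter
        (fun s : {s : T → Z // ∀ t, π (s t) = t} => s.1 (π z) = z), J s

/-- The generalized incompatibility robustness of a measurement assemblage. -/
def etaGAsm {d : ℕ} {Z T : Type} [Fintype Z] [Fintype T] [DecidableEq T] [DecidableEq Z]
    (π : Z → T) (M : Z → Matrix (Fin d) (Fin d) ℂ) : ℝ :=
  sSup {η : ℝ | η ∈ Set.Icc 0 1 ∧ ∃ N, IsAssemblage π N ∧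
    CompatibleAsm π (fun z => (η : ℂ) • M z + ((1 - η : ℝ) : ℂ) • N z)}

/-- `G`-covariance of an assemblage with respect to a projective unitary representation `U`. -/
def CovariantAsm {d : ℕ} {Z : Type} (G : Type) [Group G] [MulAction G Z]
    (U : G → Matrix (Fin d) (Fin d) ℂ) (M : Z → Matrix (Fin d) (Fin d) ℂ) : Prop :=
  ∀ (g : G) (z : Z), M (g • z) = U g * M z * (U g)ᴴ

theorem posSemidef_one_sub_of_sum_eq_one {n ι : Type*} [DecidableEq n] {s : Finset ι}
    {f : ι → Matrix n n ℂ} (hf : ∀ i ∈ s, (f i).PosSemidef) (hs : ∑ i ∈ s, f i = 1) {i : ι}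
    (hi : i ∈ s) : (1 - f i).PosSemidef := by
  open scoped MatrixOrder in
  rw [← Matrix.le_iff, ← hs]
  exact single_le_sum (fun j hj => nonneg_iff_posSemidef.2 (hf j hj)) hi

section Effects

variable {n : Type*} [Fintype n] [DecidableEq n]

theorem isClosed_setOf_posSemidef : IsClosed {A : Matrix n n ℂ | A.PosSemidef} := by
  -- the operator norm makes `Matrix n n ℂ` a C⋆-algebra, whose Loewner order is order-closed
  open scoped Matrix.Norms.L2Operator MatrixOrder in
  convert isClosed_Ici (a := (0 : Matrix n n ℂ)) using 1
  ext A
  exact nonneg_iff_posSemidef.symm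

theorem isCompact_setOf_posSemidef_and_posSemidef_one_sub :
    IsCompact {A : Matrix n n ℂ | A.PosSemidef ∧ (1 - A).PosSemidef} := by
  open scoped Matrix.Norms.L2Operator MatrixOrder in
  have hIcc : {A : Matrix n n ℂ | A.PosSemidef ∧ (1 - A).PosSemidef} = Set.Icc 0 1 := by
    ext A
    simp [Matrix.le_iff]
  rw [hIcc]
  refine Metric.isCompact_of_isClosed_isBounded isClosed_Icc ?_
  exact (Metric.isBounded_closedBall (x := 0) (r := 1)).subset fun A hA => by
    simpa using (CStarAlgebra.mem_Icc_iff_norm_le_one.1 hA).2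

theorem smul_mul_mul_conjTranspose_smul {c : ℂ} (hc : ‖c‖ = 1) (A B : Matrix n n ℂ) :
    c • B * A * (c • B)ᴴ = B * A * Bᴴ := by
  have hcc : c * star c = 1 := by
    rw [Complex.star_def, Complex.mul_conj', hc]
    norm_num
  rw [conjTranspose_smul, smul_mul_assoc, smul_mul_assoc, mul_smul_comm, smul_smul, hcc, one_smul]

end Effects

def IsPOVM {ι : Type*} [Fintype ι] {d : ℕ} (J : ι → Matrix (Fin d) (Fin d) ℂ) : Prop :=
  (∀ i, (J i).PosSemidef) ∧ ∑ i, J i = 1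

abbrev BundleSection {Z T : Type} (π : Z → T) : Type := {s : T → Z // ∀ t, π (s t) = t}

section Bundle

variable {d : ℕ} {Z T : Type} [Fintype Z] [DecidableEq T] {π : Z → T}

theorem isClosed_setOf_isPOVM {ι : Type*} [Fintype ι] :
    IsClosed {J : ι → Matrix (Fin d) (Fin d) ℂ | IsPOVM J} := by
  simp only [IsPOVM, Set.ofPred_and, Set.ofPred_forall]
  exact (isClosed_iInter fun i =>
      (isClosed_setOf_posSemidef (n := Fin d)).preimage (continuous_apply i)).inter
    (isClosed_eq (continuous_finsetSum _ fun i _ => continuous_apply i) continuous_const)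

theorem isClosed_setOf_isAssemblage (π : Z → T) :
    IsClosed {N : Z → Matrix (Fin d) (Fin d) ℂ | IsAssemblage π N} := by
  simp only [IsAssemblage, Set.ofPred_and, Set.ofPred_forall]
  exact (isClosed_iInter fun z =>
      (isClosed_setOf_posSemidef (n := Fin d)).preimage (continuous_apply z)).inter
    (isClosed_iInter fun t =>
      isClosed_eq (continuous_finsetSum _ fun z _ => continuous_apply z) continuous_const)

theorem IsAssemblage.posSemidef_one_sub {N : Z → Matrix (Fin d) (Fin d) ℂ}
    (hN : IsAssemblage π N) (z : Z) : (1 - N z).PosSemidef :=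
  posSemidef_one_sub_of_sum_eq_one (fun z _ => hN.1 z) (hN.2 (π z)) (by simp)

theorem IsPOVM.posSemidef_one_sub {ι : Type*} [Fintype ι] {J : ι → Matrix (Fin d) (Fin d) ℂ}
    (hJ : IsPOVM J) (i : ι) : (1 - J i).PosSemidef :=
  posSemidef_one_sub_of_sum_eq_one (fun i _ => hJ.1 i) hJ.2 (mem_univ i)

theorem CompatibleAsm.isAssemblage [Fintype T] [DecidableEq Z]
    {M : Z → Matrix (Fin d) (Fin d) ℂ} (hM : CompatibleAsm π M) : IsAssemblage π M := by
  obtain ⟨J, hJ, hJsum, hMJ⟩ := hM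
  refine ⟨fun z => hMJ z ▸ posSemidef_sum _ fun s _ => hJ s, fun t => ?_⟩
  simp only [hMJ]
  rw [← hJsum, ← sum_fiberwise_of_maps_to (g := fun s : BundleSection π => s.1 t)
    (t := univ.filter (fun z => π z = t)) (fun s _ => by simp [s.2 t])]
  refine sum_congr rfl fun z hz => ?_
  rw [(mem_filter.1 hz).2]

end Bundle

theorem sum_filter_inv_smul {G X M : Type*} [Group G] [MulAction G X] [Fintype X]
    [AddCommMonoid M] (p : X → Prop) [DecidablePred p] (f : X → M) (g : G) :
    ∑ x ∈ univ.filter p, f (g⁻¹ • x) = ∑ x ∈ univ.filter (fun x => p (g • x)), f x := by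
  simp only [sum_filter]
  rw [← Equiv.sum_comp (MulAction.toPerm g)]
  simp only [MulAction.toPerm_apply, inv_smul_smul]

section Twirl

variable (G : Type) [Group G] [Fintype G] {X : Type} [MulAction G X] {n : Type*} [Fintype n]

def twirl (U : G → Matrix n n ℂ) (f : X → Matrix n n ℂ) (x : X) : Matrix n n ℂ :=
  (Fintype.card G : ℂ)⁻¹ • ∑ g : G, U g * f (g⁻¹ • x) * (U g)ᴴ

variable {G} {U : G → Matrix n n ℂ}

theorem inv_card_smul_sum_const {M : Type*} [AddCommMonoid M] [Module ℂ M] (A : M) :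
    (Fintype.card G : ℂ)⁻¹ • ∑ _g : G, A = A := by
  rw [sum_const, card_univ, ← Nat.cast_smul_eq_nsmul ℂ, smul_smul,
    inv_mul_cancel₀ (Nat.cast_ne_zero.2 Fintype.card_ne_zero), one_smul]

theorem twirl_smul_add (a b : ℂ) (f h : X → Matrix n n ℂ) :
    twirl G U (fun x => a • f x + b • h x) = fun x => a • twirl G U f x + b • twirl G U h x := by
  ext1 x
  simp only [twirl, mul_add, add_mul, mul_smul_comm, smul_mul_assoc, sum_add_distrib, smul_add,
    ← smul_sum, smul_comm _ a, smul_comm _ b]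

theorem sum_filter_twirl [Fintype X] (p : X → Prop) [DecidablePred p] (f : X → Matrix n n ℂ) :
    ∑ x ∈ univ.filter p, twirl G U f x = (Fintype.card G : ℂ)⁻¹ •
      ∑ g : G, U g * (∑ x ∈ univ.filter (fun x => p (g • x)), f x) * (U g)ᴴ := by
  simp only [twirl, ← smul_sum, mul_sum, sum_mul, ← sum_filter_inv_smul p _ _]
  rw [sum_comm]

theorem posSemidef_twirl {f : X → Matrix n n ℂ} (hf : ∀ x, (f x).PosSemidef) (x : X) :
    (twirl G U f x).PosSemidef :=
  .smul (posSemidef_sum _ fun g _ => (hf _).mul_mul_conjTranspose_same _) (by positivity)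

variable [DecidableEq n]

theorem sum_filter_twirl_eq_one [Fintype X] (hU : ∀ g, U g ∈ unitaryGroup n ℂ) (p : X → Prop)
    [DecidablePred p] {f : X → Matrix n n ℂ}
    (hf : ∀ g : G, ∑ x ∈ univ.filter (fun x => p (g • x)), f x = 1) :
    ∑ x ∈ univ.filter p, twirl G U f x = 1 := by
  simp only [sum_filter_twirl, hf, mul_one, fun g => mem_unitaryGroup_iff.1 (hU g),
    ← star_eq_conjTranspose]
  exact inv_card_smul_sum_const 1

end Twirl

section Covariance

variable {d : ℕ} {G : Type} [Group G] [Fintype G] {Z : Type} [MulAction G Z]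
  {U : G → Matrix (Fin d) (Fin d) ℂ}

theorem CovariantAsm.twirl_eq {M : Z → Matrix (Fin d) (Fin d) ℂ} (hM : CovariantAsm G U M) :
    twirl G U M = M := by
  ext1 z
  have hconj : ∀ g : G, U g * M (g⁻¹ • z) * (U g)ᴴ = M z := fun g => by
    rw [← hM, smul_inv_smul]
  simp only [twirl, hconj]
  exact inv_card_smul_sum_const (M z)

theorem covariantAsm_twirl (hU : ∀ g h : G, ∃ c : ℂ, ‖c‖ = 1 ∧ U (g * h) = c • (U g * U h))
    (f : Z → Matrix (Fin d) (Fin d) ℂ) : CovariantAsm G U (twirl G U f) := by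
  intro g z
  have hconj : ∀ h : G, U (g * h) * f ((g * h)⁻¹ • g • z) * (U (g * h))ᴴ =
      U g * (U h * f (h⁻¹ • z) * (U h)ᴴ) * (U g)ᴴ := fun h => by
    obtain ⟨c, hc, hgh⟩ := hU g h
    rw [_root_.mul_inv_rev, mul_smul, inv_smul_smul, hgh, smul_mul_mul_conjTranspose_smul hc,
      conjTranspose_mul]
    simp only [Matrix.mul_assoc]
  simp only [twirl]
  rw [← Equiv.sum_comp (Equiv.mulLeft g)]
  simp only [Equiv.coe_mulLeft, hconj, mul_smul_comm, smul_mul_assoc, mul_sum, sum_mul]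

end Covariance

section BundleTwirl

variable {d : ℕ} {Z T G : Type} [Fintype Z] [DecidableEq T] [Group G] [Fintype G]
  [MulAction G Z] [MulAction G T] {π : Z → T} {U : G → Matrix (Fin d) (Fin d) ℂ}

abbrev BundleSection.mulAction (hequiv : ∀ (g : G) (z : Z), π (g • z) = g • π z) :
    MulAction G (BundleSection π) where
  smul g s := ⟨fun t => g • s.1 (g⁻¹ • t), fun t => by rw [hequiv, s.2, smul_inv_smul]⟩
  one_smul s := Subtype.ext <| funext fun t => by
    show (1 : G) • s.1 ((1 : G)⁻¹ • t) = s.1 t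
    simp
  mul_smul g h s := Subtype.ext <| funext fun t => by
    show (g * h) • s.1 ((g * h)⁻¹ • t) = g • h • s.1 (h⁻¹ • g⁻¹ • t)
    simp [mul_smul]

theorem IsAssemblage.twirl (hequiv : ∀ (g : G) (z : Z), π (g • z) = g • π z)
    (hU : ∀ g, U g ∈ unitaryGroup (Fin d) ℂ) {N : Z → Matrix (Fin d) (Fin d) ℂ}
    (hN : IsAssemblage π N) : IsAssemblage π (twirl G U N) := by
  refine ⟨posSemidef_twirl hN.1, fun t => sum_filter_twirl_eq_one hU _ fun g => ?_⟩
  simp only [hequiv, smul_eq_iff_eq_inv_smul]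
  exact hN.2 _

theorem CompatibleAsm.twirl [Fintype T] [DecidableEq Z]
    (hequiv : ∀ (g : G) (z : Z), π (g • z) = g • π z)
    (hU : ∀ g, U g ∈ unitaryGroup (Fin d) ℂ) {M : Z → Matrix (Fin d) (Fin d) ℂ}
    (hM : CompatibleAsm π M) : CompatibleAsm π (twirl G U M) := by
  let := BundleSection.mulAction hequiv
  obtain ⟨J, hJ, hJsum, hMJ⟩ := hM
  refine ⟨_root_.twirl G U J, posSemidef_twirl hJ, ?_, fun z => ?_⟩
  · simpa using sum_filter_twirl_eq_one hU (fun _ => True) (f := J) fun _ => by simpa using hJsum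
  · have hfilter : ∀ (g : G) (s : BundleSection π),
        (g • s).1 (π z) = z ↔ s.1 (π (g⁻¹ • z)) = g⁻¹ • z := fun g s => by
      rw [hequiv]
      exact smul_eq_iff_eq_inv_smul g
    simp only [sum_filter_twirl, hfilter, ← hMJ]
    rfl

end BundleTwirl

section Robustness

variable {d : ℕ} {Z T : Type} [Fintype Z] [Fintype T] [DecidableEq T] [DecidableEq Z]

def feasibleVisibilities (π : Z → T) (M : Z → Matrix (Fin d) (Fin d) ℂ) : Set ℝ :=
  {η : ℝ | η ∈ Set.Icc 0 1 ∧ ∃ N, IsAssemblage π N ∧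
    CompatibleAsm π (fun z => (η : ℂ) • M z + ((1 - η : ℝ) : ℂ) • N z)}

theorem isCompact_feasibleVisibilities (π : Z → T) (M : Z → Matrix (Fin d) (Fin d) ℂ) :
    IsCompact (feasibleVisibilities π M) := by
  let K : Set (ℝ × (Z → Matrix (Fin d) (Fin d) ℂ) ×
      (BundleSection π → Matrix (Fin d) (Fin d) ℂ)) :=
    {x | x.1 ∈ Set.Icc 0 1 ∧ IsAssemblage π x.2.1 ∧ IsPOVM x.2.2 ∧
      ∀ z, (x.1 : ℂ) • M z + ((1 - x.1 : ℝ) : ℂ) • x.2.1 z =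
        ∑ s ∈ univ.filter (fun s : BundleSection π => s.1 (π z) = z), x.2.2 s}
  have hK : IsCompact K := by
    have hE := isCompact_setOf_posSemidef_and_posSemidef_one_sub (n := Fin d)
    refine ((isCompact_Icc (a := (0 : ℝ)) (b := 1)).prod ((isCompact_univ_pi fun _ => hE).prod
      (isCompact_univ_pi fun _ => hE))).of_isClosed_subset ?_ ?_
    · simp only [K, Set.ofPred_and, Set.ofPred_forall]
      refine (isClosed_Icc.preimage continuous_fst).inter <|
        ((isClosed_setOf_isAssemblage π).preimage (by fun_prop)).inter <|
        (isClosed_setOf_isPOVM.preimage (by fun_prop)).inter <|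
        isClosed_iInter fun z => isClosed_eq (by fun_prop) ?_
      exact continuous_finsetSum _ fun s _ => (continuous_apply s).comp (by fun_prop)
    · rintro ⟨η, N, J⟩ ⟨hη, hN, hJ, -⟩
      exact ⟨hη, fun z _ => ⟨hN.1 z, hN.posSemidef_one_sub z⟩,
        fun s _ => ⟨hJ.1 s, hJ.posSemidef_one_sub s⟩⟩
  convert hK.image continuous_fst
  ext η
  constructor
  · rintro ⟨hη, N, hN, J, hJ, hJsum, hJN⟩
    exact ⟨(η, N, J), ⟨hη, hN, ⟨hJ, hJsum⟩, hJN⟩, rfl⟩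
  · rintro ⟨⟨η, N, J⟩, ⟨hη, hN, ⟨hJ, hJsum⟩, hJN⟩, rfl⟩
    exact ⟨hη, N, hN, J, hJ, hJsum, hJN⟩

theorem zero_mem_feasibleVisibilities {π : Z → T} (hsurj : Function.Surjective π)
    (M : Z → Matrix (Fin d) (Fin d) ℂ) : 0 ∈ feasibleVisibilities π M := by
  let s₀ : BundleSection π := ⟨Function.surjInv hsurj, Function.surjInv_eq hsurj⟩
  let J : BundleSection π → Matrix (Fin d) (Fin d) ℂ := fun s => if s = s₀ then 1 else 0
  have hJ : ∀ s, (J s).PosSemidef := fun s => by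
    by_cases hs : s = s₀ <;> simp [J, hs, PosSemidef.one, PosSemidef.zero]
  have hN : CompatibleAsm π fun z =>
      ∑ s ∈ univ.filter (fun s : BundleSection π => s.1 (π z) = z), J s :=
    ⟨J, hJ, by simp [J], fun z => rfl⟩
  exact ⟨⟨le_rfl, zero_le_one⟩, _, hN.isAssemblage, by simpa using hN⟩

theorem etaGAsm_mem_feasibleVisibilities {π : Z → T} (hsurj : Function.Surjective π)
    (M : Z → Matrix (Fin d) (Fin d) ℂ) : etaGAsm π M ∈ feasibleVisibilities π M :=
  (isCompact_feasibleVisibilities π M).sSup_mem ⟨0, zero_mem_feasibleVisibilities hsurj M⟩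

theorem le_etaGAsm {π : Z → T} {M : Z → Matrix (Fin d) (Fin d) ℂ} {η : ℝ}
    (hη : η ∈ feasibleVisibilities π M) : η ≤ etaGAsm π M :=
  le_csSup ⟨1, fun _ h => h.1.2⟩ hη

end Robustness

theorem stmt_12_general {d : ℕ} {Z T G : Type} [Fintype Z] [Fintype T] [DecidableEq T] [DecidableEq Z]
    [Group G] [Fintype G] [MulAction G Z] [MulAction G T]
    (π : Z → T) (hsurj : Function.Surjective π)
    (hequiv : ∀ (g : G) (z : Z), π (g • z) = g • π z)
    (U : G → Matrix (Fin d) (Fin d) ℂ)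
    (hU : ∀ g, U g ∈ Matrix.unitaryGroup (Fin d) ℂ)
    (hUproj : ∀ g h : G, ∃ c : ℂ, ‖c‖ = 1 ∧ U (g * h) = c • (U g * U h))
    (M : Z → Matrix (Fin d) (Fin d) ℂ)
    (hMcov : CovariantAsm G U M) :
    IsGreatest
      {η : ℝ | η ∈ Set.Icc 0 1 ∧ ∃ N, IsAssemblage π N ∧ CovariantAsm G U N ∧
        CompatibleAsm π (fun z => (η : ℂ) • M z + ((1 - η : ℝ) : ℂ) • N z)}
      (etaGAsm π M) := by
  obtain ⟨hη, N, hN, hcomp⟩ := etaGAsm_mem_feasibleVisibilities hsurj M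
  refine ⟨⟨hη, twirl G U N, hN.twirl hequiv hU, covariantAsm_twirl hUproj N, ?_⟩, ?_⟩
  · simpa only [twirl_smul_add, hMcov.twirl_eq] using hcomp.twirl hequiv hU
  · rintro η ⟨hη, N, hN, -, hcomp⟩
    exact le_etaGAsm ⟨hη, N, hN, hcomp⟩

/-- for a `G`-covariant assemblage on a finite `G`-bundle, the optimal noise in
the definition of the incompatibility robustness can be taken `G`-covariant: the robustness
is the greatest feasible visibility achievable with `G`-covariant noise assemblages. -/
theorem stmt_12 {d : ℕ} {Z T G : Type} [Fintype Z] [Fintype T] [DecidableEq T] [DecidableEq Z]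
    [Group G] [Fintype G] [MulAction G Z] [MulAction G T]
    (π : Z → T) (hsurj : Function.Surjective π)
    (hequiv : ∀ (g : G) (z : Z), π (g • z) = g • π z)
    (U : G → Matrix (Fin d) (Fin d) ℂ)
    (hU : ∀ g, U g ∈ Matrix.unitaryGroup (Fin d) ℂ)
    (hUproj : ∀ g h : G, ∃ c : ℂ, ‖c‖ = 1 ∧ U (g * h) = c • (U g * U h))
    (M : Z → Matrix (Fin d) (Fin d) ℂ)
    (hM : IsAssemblage π M) (hMcov : CovariantAsm G U M) :
    IsGreatest
      {η : ℝ | η ∈ Set.Icc 0 1 ∧ ∃ N, IsAssemblage π N ∧ CovariantAsm G U N ∧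
        CompatibleAsm π (fun z => (η : ℂ) • M z + ((1 - η : ℝ) : ℂ) • N z)}
      (etaGAsm π M) :=
  stmt_12_general π hsurj hequiv U hU hUproj M hMcov
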